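/- arXiv:2005.14042 — 5 statements merged into one kernel-verified Lean document; each statement's English description precedes it below -/
import Mathlib

section
/- Let H ∈ ℝ^{n×n} be a symmetric matrix with nonnegative entries, let x̃ ∈ ℝⁿ have strictly positive entries, and let κ ∈ ℝⁿ have nonnegative entries. Define the diagonal matrix Λ(x̃) ∈ ℝ^{n×n} by Λ(x̃)_{ii} := ((Hx̃)_i + κ_i)/x̃_i. Then Λ(x̃) − H is positive semi-definite. -/
open Matrix BigOperators

/-- **The diagonal majorising matrix of the quadratic-upper-bound construction is a
majorant of `H`.**  Let `H` be a symmetric matrix with nonnegative entries, `xt` a vector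
with strictly positive entries, and `κ` a vector with nonnegative entries.  Define the
diagonal matrix `Λ(xt)` with entries `Λ(xt)_{ii} = ((H xt)_i + κ_i)/xt_i`.  Then
`Λ(xt) − H` is positive semi-definite. -/
theorem diagonal_majorant_posSemidef
    (n : ℕ) (H : Matrix (Fin n) (Fin n) ℝ)
    (hHsymm : Hᵀ = H) (hHnonneg : ∀ i j, 0 ≤ H i j)
    (xt : Fin n → ℝ) (hxt : ∀ i, 0 < xt i)
    (κ : Fin n → ℝ) (hκ : ∀ i, 0 ≤ κ i) :
    ∀ v : Fin n → ℝ,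
      0 ≤ v ⬝ᵥ ((Matrix.diagonal (fun i => ((H *ᵥ xt) i + κ i) / xt i) - H) *ᵥ v) := by
  intro v
  have hne : ∀ i, xt i ≠ 0 := fun i => (hxt i).ne'
  have hsymm : ∀ i j, H j i = H i j := fun i j =>
    (congrFun (congrFun hHsymm j) i).symm
  set g : Fin n → Fin n → ℝ :=
    fun i j => H i j * xt j * v i ^ 2 / xt i - H i j * v i * v j with hg
  set h : Fin n → Fin n → ℝ :=
    fun i j => H i j * (xt j * v i - xt i * v j) ^ 2 / (2 * xt i * xt j) with hh
  have hpoint : ∀ i j, g i j + g j i = 2 * h i j := by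
    intro i j
    have hi := hne i
    have hj := hne j
    simp only [hg, hh, hsymm i j]
    field_simp
    ring
  have hgh : (∑ i, ∑ j, g i j) = ∑ i, ∑ j, h i j := by
    have hc : (∑ i, ∑ j, g i j) = ∑ i, ∑ j, g j i := Finset.sum_comm
    have h2 : (∑ i, ∑ j, g i j) + (∑ i, ∑ j, g i j)
        = 2 * ∑ i, ∑ j, h i j := by
      nth_rewrite 2 [hc]
      rw [← Finset.sum_add_distrib]
      simp_rw [← Finset.sum_add_distrib, hpoint, ← Finset.mul_sum]
    linarith
  have key : v ⬝ᵥ ((Matrix.diagonal (fun i => ((H *ᵥ xt) i + κ i) / xt i) - H) *ᵥ v)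
      = (∑ i, ∑ j, g i j) + ∑ i, κ i * v i ^ 2 / xt i := by
    rw [Matrix.sub_mulVec, dotProduct_sub]
    have hd : v ⬝ᵥ (Matrix.diagonal (fun i => ((H *ᵥ xt) i + κ i) / xt i) *ᵥ v)
        = ∑ i, v i * (((H *ᵥ xt) i + κ i) / xt i * v i) := by
      simp [dotProduct, Matrix.mulVec_diagonal]
    rw [hd]
    simp only [dotProduct, Matrix.mulVec, hg]
    rw [← Finset.sum_sub_distrib, ← Finset.sum_add_distrib]
    refine Finset.sum_congr rfl fun i _ => ?_
    rw [Finset.sum_sub_distrib, ← Finset.sum_div, ← Finset.sum_mul]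
    have e2 : ∑ j, H i j * v i * v j = ∑ j, v i * (H i j * v j) :=
      Finset.sum_congr rfl fun j _ => by ring
    rw [e2, ← Finset.mul_sum]
    have hi := hne i
    field_simp
    ring
  rw [key, hgh]
  apply add_nonneg
  · apply Finset.sum_nonneg; intro i _
    apply Finset.sum_nonneg; intro j _
    exact div_nonneg (mul_nonneg (hHnonneg i j) (sq_nonneg _))
      (by nlinarith [hxt i, hxt j])
  · apply Finset.sum_nonneg; intro i _
    exact div_nonneg (mul_nonneg (hκ i) (sq_nonneg _)) (hxt i).le
end

section
/- Let A ∈ ℝ^{M×N}, y ∈ ℝ^{M}, μ ≥ 0, λ ≥ 0, and define on the strictly positive orthant the function f(x) := (1/2)‖Ax − y‖₂² + (μ/2)‖x‖₂² + λ Σᵢ xᵢ, whose gradient is ∇f(x) = AᵀAx − Aᵀy + μx + λ𝟙 and whose Hessian is AᵀA + μI. Let x̃ ∈ ℝᴺ have strictly positive entries and assume every entry of the vector AᵀAx̃ + μx̃ + λ𝟙 is strictly positive. Define the diagonal matrix Λ(x̃)_{ii} := ((AᵀA + μI)x̃)_i + λ)/x̃_i. Then the preconditioned gradient step x̃ − Λ(x̃)⁻¹∇f(x̃)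 equals the multiplicative update x̃ ∘ (Aᵀy) ⊘ (AᵀAx̃ + μx̃ + λ𝟙), where ∘ is entrywise multiplication and ⊘ entrywise division of vectors, and 𝟙 is the all-ones vector. -/
open Matrix BigOperators

/-- The regularised least-squares objective
`f(x) = ½‖Ax − y‖² + (μ/2)‖x‖² + λ Σᵢ xᵢ` arising in each sub-update of the
multiplicative NMF algorithms (on the strictly positive orthant, where `‖x‖₁ = Σᵢ xᵢ`). -/
noncomputable def regLSObjective (M N : ℕ) (A : Matrix (Fin M) (Fin N) ℝ)
    (y : Fin M → ℝ) (μ lam : ℝ) (x : Fin N → ℝ) : ℝ :=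
  (1/2) * (∑ m, ((A *ᵥ x) m - y m) ^ 2) + (μ/2) * (∑ i, (x i) ^ 2) + lam * ∑ i, x i

/-- **The preconditioned gradient step equals the multiplicative update.**
With `∇f(x) = AᵀAx − Aᵀy + μx + λ𝟙` (the gradient of `regLSObjective`) and the diagonal
matrix `Λ(xt)_{ii} = (((AᵀA + μI)xt)_i + λ)/xt_i`, for any strictly positive `xt` whose
denominator vector `AᵀA xt + μ xt + λ𝟙` has strictly positive entries, the step
`xt − Λ(xt)⁻¹ ∇f(xt)` equals `xt ∘ (Aᵀy) ⊘ (AᵀA xt + μ xt + λ𝟙)` entrywise. -/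
theorem preconditioned_step_eq_multiplicative_update
    (M N : ℕ) (A : Matrix (Fin M) (Fin N) ℝ) (y : Fin M → ℝ)
    (μ lam : ℝ) (hμ : 0 ≤ μ) (hlam : 0 ≤ lam)
    (xt : Fin N → ℝ) (hxt : ∀ i, 0 < xt i)
    (hden : ∀ i, 0 < ((Aᵀ * A) *ᵥ xt) i + μ * xt i + lam) :
    ∀ i, xt i
        - ((Matrix.diagonal
              (fun i => (((Aᵀ * A + μ • (1 : Matrix (Fin N) (Fin N) ℝ)) *ᵥ xt) i + lam)
                / xt i))⁻¹
            *ᵥ fun i => ((Aᵀ * A) *ᵥ xt) i - (Aᵀ *ᵥ y) i + μ * xt i + lam) i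
      = xt i * (Aᵀ *ᵥ y) i / (((Aᵀ * A) *ᵥ xt) i + μ * xt i + lam) := by
  have hmul : ∀ j, (((Aᵀ * A + μ • (1 : Matrix (Fin N) (Fin N) ℝ)) *ᵥ xt) j)
      = ((Aᵀ * A) *ᵥ xt) j + μ * xt j := by
    intro j
    simp [Matrix.add_mulVec, Matrix.smul_mulVec]
  set d : Fin N → ℝ := fun j =>
      (((Aᵀ * A + μ • (1 : Matrix (Fin N) (Fin N) ℝ)) *ᵥ xt) j + lam) / xt j with hd
  have hdne : ∀ j, d j ≠ 0 := by
    intro j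
    have : 0 < d j := by
      rw [hd]
      exact div_pos (by rw [hmul j]; exact hden j) (hxt j)
    exact this.ne'
  have hinv : (Matrix.diagonal d)⁻¹ = Matrix.diagonal (fun j => (d j)⁻¹) := by
    apply Matrix.inv_eq_right_inv
    rw [Matrix.diagonal_mul_diagonal]
    convert Matrix.diagonal_one using 2
    ext j
    exact mul_inv_cancel₀ (hdne j)
  intro i
  rw [hinv, Matrix.mulVec_diagonal]
  have hdi : d i = (((Aᵀ * A) *ᵥ xt) i + μ * xt i + lam) / xt i := by
    rw [hd]; simp only [hmul i]
  rw [hdi]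
  have h1 : ((Aᵀ * A) *ᵥ xt) i + μ * xt i + lam ≠ 0 := (hden i).ne'
  have hx : xt i ≠ 0 := (hxt i).ne'
  rw [inv_div, div_mul_eq_mul_div, eq_div_iff h1, sub_mul, div_mul_cancel₀ _ h1]
  ring
end

section
/- (X-sub-update of model BC-X decreases the cost.) Let A_t ∈ ℝ^{M×N} be nonnegative for t = 1,…,T, Y ∈ ℝ^{M×T} nonnegative, α > 0, λ_X, μ_X ≥ 0. Fix nonnegative B ∈ ℝ^{N×K} and C ∈ ℝ^{K×T}, and let X̃ ∈ ℝ^{N×T} have strictly positive entries. Define X⁺ columnwise by X⁺_{•,t} := X̃_{•,t} ∘ (A_tᵀY_{•,t} + α(BC)_{•,t}) ⊘ (A_tᵀA_tX̃_{•,t} + (μ_X + α)X̃_{•,t} + λ_X𝟙_{N×1}). Then Σ_{t=1}^T (1/2)‖A_tX⁺_{•,t} − Y_{•,t}‖₂² + (α/2)‖BC − X⁺‖_F² + λ_X‖X⁺‖₁ + (μ_X/2)‖X⁺‖_F² ≤ Σ_{t=1}^T (1/2)‖A_tX̃_{•,t} − Y_{•,t}‖₂² + (α/2)‖BC − X̃‖_F²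 + λ_X‖X̃‖₁ + (μ_X/2)‖X̃‖_F². -/
open Matrix BigOperators

private lemma aux_ab (q a b c d : ℝ) (hq : 0 ≤ q) (hc : 0 < c) (hd : 0 < d) :
    q * a * b ≤ (q * d * a ^ 2 / c + q * c * b ^ 2 / d) / 2 := by
  rw [le_div_iff₀ (by norm_num : (0:ℝ) < 2)]
  have h : q * d * a ^ 2 / c + q * c * b ^ 2 / d
      = (q * d ^ 2 * a ^ 2 + q * c ^ 2 * b ^ 2) / (c * d) := by
    field_simp
  rw [h, le_div_iff₀ (by positivity)]
  nlinarith [mul_nonneg hq (sq_nonneg (d * a - c * b))]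

private lemma div_helper1 (a b c : ℝ) (hb : b ≠ 0) :
    c * a / b - c = -(c * (b - a) / b) := by
  field_simp; ring

private lemma div_helper2 (a b c : ℝ) (hb : 0 < b) (hc : 0 < c) :
    b * (-(c * (b - a) / b)) ^ 2 / c = c * (b - a) ^ 2 / b := by
  rw [neg_sq, div_pow, mul_pow, eq_div_iff hb.ne']
  field_simp

private lemma div_helper3 (a b c : ℝ) (hb : b ≠ 0) :
    (b - a) * (-(c * (b - a) / b)) = -(c * (b - a) ^ 2 / b) := by
  rw [mul_neg, neg_inj, mul_div_assoc']
  congr 1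
  ring

private lemma lee_seung {N : ℕ} (Q : Fin N → Fin N → ℝ) (hQ : ∀ n m, 0 ≤ Q n m)
    (hsym : ∀ n m, Q n m = Q m n) (x : Fin N → ℝ) (hx : ∀ n, 0 < x n) (v : Fin N → ℝ) :
    ∑ n, ∑ m, Q n m * v n * v m ≤ ∑ n, (∑ m, Q n m * x m) * v n ^ 2 / x n := by
  have step1 : ∑ n, ∑ m, Q n m * v n * v m
      ≤ ∑ n, ∑ m, (Q n m * x m * v n ^ 2 / x n + Q n m * x n * v m ^ 2 / x m) / 2 :=
    Finset.sum_le_sum fun n _ => Finset.sum_le_sum fun m _ =>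
      aux_ab (Q n m) (v n) (v m) (x n) (x m) (hQ n m) (hx n) (hx m)
  refine step1.trans_eq ?_
  have swap : ∑ n, ∑ m, Q n m * x n * v m ^ 2 / x m
      = ∑ n, ∑ m, Q n m * x m * v n ^ 2 / x n := by
    rw [Finset.sum_comm]
    exact Finset.sum_congr rfl fun n _ => Finset.sum_congr rfl fun m _ => by rw [hsym m n]
  calc ∑ n, ∑ m, (Q n m * x m * v n ^ 2 / x n + Q n m * x n * v m ^ 2 / x m) / 2
      = ((∑ n, ∑ m, Q n m * x m * v n ^ 2 / x n)
          + ∑ n, ∑ m, Q n m * x n * v m ^ 2 / x m) / 2 := by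
        simp [add_div, Finset.sum_add_distrib, ← Finset.sum_div]
    _ = ∑ n, ∑ m, Q n m * x m * v n ^ 2 / x n := by rw [swap]; ring
    _ = ∑ n, (∑ m, Q n m * x m) * v n ^ 2 / x n := by
        refine Finset.sum_congr rfl fun n _ => ?_
        rw [Finset.sum_mul, Finset.sum_div]

private lemma expand_resid {M N : ℕ} (A : Matrix (Fin M) (Fin N) ℝ) (y : Fin M → ℝ)
    (v : Fin N → ℝ) :
    ∑ m, ((A *ᵥ v) m - y m) ^ 2
      = ∑ n, ∑ n', (∑ m, A m n * A m n') * v n * v n'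
        - 2 * ∑ n, (∑ m, A m n * y m) * v n + ∑ m, y m ^ 2 := by
  have h1 : ∀ m : Fin M, ((A *ᵥ v) m - y m) ^ 2
      = (∑ n, ∑ n', (A m n * v n) * (A m n' * v n'))
        - 2 * (∑ n, (A m n * y m) * v n) + y m ^ 2 := by
    intro m
    have e1 : (A *ᵥ v) m = ∑ n, A m n * v n := by
      simp [mulVec, dotProduct]
    have e2 : (∑ n, A m n * v n) * (∑ n, A m n * v n)
        = ∑ n, ∑ n', (A m n * v n) * (A m n' * v n') := by
      rw [Finset.sum_mul_sum]
    have e3 : y m * (∑ n, A m n * v n) = ∑ n, (A m n * y m) * v n := by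
      rw [Finset.mul_sum]; exact Finset.sum_congr rfl fun n _ => by ring
    rw [e1, sub_sq, sq, e2, ← e3]; ring
  rw [Finset.sum_congr rfl fun m _ => h1 m]
  rw [Finset.sum_add_distrib, Finset.sum_sub_distrib]
  congr 1
  congr 1
  · rw [Finset.sum_comm]
    refine Finset.sum_congr rfl fun n _ => ?_
    rw [Finset.sum_comm]
    refine Finset.sum_congr rfl fun n' _ => ?_
    rw [Finset.sum_mul, Finset.sum_mul]
    exact Finset.sum_congr rfl fun m _ => by ring
  · rw [← Finset.mul_sum, Finset.sum_comm]
    congr 1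
    refine Finset.sum_congr rfl fun n _ => ?_
    rw [Finset.sum_mul]

private lemma col_step {M N : ℕ} (A : Matrix (Fin M) (Fin N) ℝ) (hA : ∀ m n, 0 ≤ A m n)
    (y : Fin M → ℝ) (hy : ∀ m, 0 ≤ y m)
    (g : Fin N → ℝ) (hg : ∀ n, 0 ≤ g n)
    (α lam mu : ℝ) (hα : 0 < α) (hlam : 0 ≤ lam) (hmu : 0 ≤ mu)
    (x : Fin N → ℝ) (hx : ∀ n, 0 < x n)
    (xp : Fin N → ℝ)
    (hxp : ∀ n, xp n = x n * ((Aᵀ *ᵥ y) n + α * g n)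
        / (((Aᵀ * A) *ᵥ x) n + (mu + α) * x n + lam)) :
    (1/2) * ∑ m, ((A *ᵥ xp) m - y m) ^ 2 + (α/2) * ∑ n, (g n - xp n) ^ 2
        + lam * ∑ n, |xp n| + (mu/2) * ∑ n, xp n ^ 2
      ≤ (1/2) * ∑ m, ((A *ᵥ x) m - y m) ^ 2 + (α/2) * ∑ n, (g n - x n) ^ 2
        + lam * ∑ n, |x n| + (mu/2) * ∑ n, x n ^ 2 := by
  set Q : Fin N → Fin N → ℝ :=
    fun n n' => (∑ m, A m n * A m n') + (if n = n' then mu + α else 0) with hQdef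
  set q : Fin N → ℝ := fun n => (∑ m, A m n * y m) + α * g n with hqdef
  set d : Fin N → ℝ := fun n => (∑ m, Q n m * x m) + lam with hddef
  have hQ0 : ∀ n m, 0 ≤ Q n m := by
    intro n m
    have : 0 ≤ ∑ k, A k n * A k m :=
      Finset.sum_nonneg fun k _ => mul_nonneg (hA k n) (hA k m)
    have h2 : (0:ℝ) ≤ if n = m then mu + α else 0 := by
      split_ifs
      · linarith
      · exact le_rfl
    exact add_nonneg this h2
  have hQsym : ∀ n m, Q n m = Q m n := by
    intro n m
    simp only [hQdef]
    congr 1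
    · exact Finset.sum_congr rfl fun k _ => by ring
    · by_cases h : n = m <;> simp [h, eq_comm]
  have hQx : ∀ n, ∑ m, Q n m * x m = (∑ m, (∑ k, A k n * A k m) * x m) + (mu + α) * x n := by
    intro n
    simp only [hQdef]
    rw [Finset.sum_congr rfl (fun m _ => add_mul _ _ _), Finset.sum_add_distrib]
    congr 1
    simp
  have hAAx : ∀ n, ((Aᵀ * A) *ᵥ x) n = ∑ m, (∑ k, A k n * A k m) * x m := by
    intro n
    simp [mulVec, dotProduct, Matrix.mul_apply, Finset.sum_mul]
  have hAy : ∀ n, (Aᵀ *ᵥ y) n = ∑ m, A m n * y m := by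
    intro n; simp [mulVec, dotProduct]
  have hd : ∀ n, d n = ((Aᵀ * A) *ᵥ x) n + (mu + α) * x n + lam := by
    intro n; rw [hddef]; simp only []; rw [hQx, hAAx]
  have hdpos : ∀ n, 0 < d n := by
    intro n
    rw [hd, hAAx]
    have h1 : 0 ≤ ∑ m, (∑ k, A k n * A k m) * x m :=
      Finset.sum_nonneg fun m _ => mul_nonneg
        (Finset.sum_nonneg fun k _ => mul_nonneg (hA k n) (hA k m)) (hx m).le
    nlinarith [hx n, hα, hmu, hlam]
  have hq0 : ∀ n, 0 ≤ q n := by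
    intro n
    exact add_nonneg (Finset.sum_nonneg fun m _ => mul_nonneg (hA m n) (hy m))
      (mul_nonneg hα.le (hg n))
  have hxpq : ∀ n, xp n = x n * q n / d n := by
    intro n; rw [hxp n, hd n, hAy]
  have hxp0 : ∀ n, 0 ≤ xp n := by
    intro n; rw [hxpq n]
    exact div_nonneg (mul_nonneg (hx n).le (hq0 n)) (hdpos n).le
  -- expansion of the cost
  have expand : ∀ v : Fin N → ℝ, (∀ n, 0 ≤ v n) →
      (1/2) * ∑ m, ((A *ᵥ v) m - y m) ^ 2 + (α/2) * ∑ n, (g n - v n) ^ 2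
        + lam * ∑ n, |v n| + (mu/2) * ∑ n, v n ^ 2
      = (1/2) * ∑ n, ∑ n', Q n n' * v n * v n' - ∑ n, q n * v n + lam * ∑ n, v n
        + ((1/2) * ∑ m, y m ^ 2 + (α/2) * ∑ n, g n ^ 2) := by
    intro v hv
    have habs : ∑ n, |v n| = ∑ n, v n :=
      Finset.sum_congr rfl fun n _ => abs_of_nonneg (hv n)
    have hQvv : ∑ n, ∑ n', Q n n' * v n * v n'
        = (∑ n, ∑ n', (∑ m, A m n * A m n') * v n * v n') + (mu + α) * ∑ n, v n ^ 2 := by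
      simp only [hQdef]
      rw [Finset.mul_sum, ← Finset.sum_add_distrib]
      refine Finset.sum_congr rfl fun n _ => ?_
      have h2 : ∑ n', (if n = n' then mu + α else 0) * v n * v n' = (mu + α) * v n ^ 2 := by
        simp [ite_mul, Finset.sum_ite_eq, sq, mul_assoc]
      rw [Finset.sum_congr rfl (fun n' _ => by rw [add_mul, add_mul]),
        Finset.sum_add_distrib, h2]
    have hgv : ∑ n, (g n - v n) ^ 2
        = ∑ n, g n ^ 2 - 2 * ∑ n, g n * v n + ∑ n, v n ^ 2 := by
      rw [Finset.mul_sum, ← Finset.sum_sub_distrib, ← Finset.sum_add_distrib]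
      exact Finset.sum_congr rfl fun n _ => by ring
    have hqv : ∑ n, q n * v n
        = ∑ n, (∑ m, A m n * y m) * v n + α * ∑ n, g n * v n := by
      simp only [hqdef]
      rw [Finset.mul_sum, ← Finset.sum_add_distrib]
      exact Finset.sum_congr rfl fun n _ => by ring
    rw [expand_resid A y v, habs, hQvv, hgv, hqv]
    ring
  rw [expand xp hxp0, expand x (fun n => (hx n).le)]
  -- quadratic decomposition
  have cross : ∀ w : Fin N → ℝ, ∑ n, ∑ m, Q n m * x n * w m
      = ∑ n, (∑ m, Q n m * x m) * w n := by
    intro w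
    rw [Finset.sum_comm]
    refine Finset.sum_congr rfl fun m _ => ?_
    rw [Finset.sum_mul]
    exact Finset.sum_congr rfl fun n _ => by rw [hQsym n m]
  have decomp : ∑ n, ∑ m, Q n m * xp n * xp m
      = ∑ n, ∑ m, Q n m * (xp n - x n) * (xp m - x m)
        + 2 * ∑ n, (∑ m, Q n m * x m) * (xp n - x n)
        + ∑ n, ∑ m, Q n m * x n * x m := by
    have c1 : ∑ n, ∑ m, Q n m * (xp n - x n) * x m
        = ∑ n, (∑ m, Q n m * x m) * (xp n - x n) := by
      refine Finset.sum_congr rfl fun n _ => ?_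
      rw [Finset.sum_mul]
      exact Finset.sum_congr rfl fun m _ => by ring
    have c2 : ∑ n, ∑ m, Q n m * x n * (xp m - x m)
        = ∑ n, (∑ m, Q n m * x m) * (xp n - x n) := cross _
    have e : ∀ n m, Q n m * xp n * xp m
        = Q n m * (xp n - x n) * (xp m - x m) + Q n m * (xp n - x n) * x m
          + Q n m * x n * (xp m - x m) + Q n m * x n * x m := fun n m => by ring
    calc ∑ n, ∑ m, Q n m * xp n * xp m
        = ∑ n, ∑ m, (Q n m * (xp n - x n) * (xp m - x m) + Q n m * (xp n - x n) * x m
            + Q n m * x n * (xp m - x m) + Q n m * x n * x m) := by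
          exact Finset.sum_congr rfl fun n _ => Finset.sum_congr rfl fun m _ => e n m
      _ = (∑ n, ∑ m, Q n m * (xp n - x n) * (xp m - x m))
            + (∑ n, ∑ m, Q n m * (xp n - x n) * x m)
            + (∑ n, ∑ m, Q n m * x n * (xp m - x m))
            + ∑ n, ∑ m, Q n m * x n * x m := by
          simp [Finset.sum_add_distrib]
      _ = _ := by rw [c1, c2]; ring
  -- bound the quadratic term
  have hΔ : ∀ n, xp n - x n = -(x n * (d n - q n) / d n) := by
    intro n
    rw [hxpq n]
    exact div_helper1 (q n) (d n) (x n) (hdpos n).ne'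
  have LS := lee_seung Q hQ0 hQsym x hx (fun n => xp n - x n)
  have LS2 : ∑ n, (∑ m, Q n m * x m) * (xp n - x n) ^ 2 / x n
      ≤ ∑ n, x n * (d n - q n) ^ 2 / d n := by
    refine Finset.sum_le_sum fun n _ => ?_
    have hb : (∑ m, Q n m * x m) ≤ d n := by
      simp only [hddef]
      exact le_add_of_nonneg_right hlam
    have h1 : (∑ m, Q n m * x m) * (xp n - x n) ^ 2 / x n
        ≤ d n * (xp n - x n) ^ 2 / x n := by
      have h2 := mul_le_mul_of_nonneg_right hb (sq_nonneg (xp n - x n))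
      exact (div_le_div_iff_of_pos_right (hx n)).mpr h2
    refine h1.trans_eq ?_
    rw [hΔ n]
    exact div_helper2 (q n) (d n) (x n) (hdpos n) (hx n)
  have hlin : ∑ n, (d n - q n) * (xp n - x n) = -∑ n, x n * (d n - q n) ^ 2 / d n := by
    rw [← Finset.sum_neg_distrib]
    refine Finset.sum_congr rfl fun n _ => ?_
    rw [hΔ n]
    exact div_helper3 (q n) (d n) (x n) (hdpos n).ne'
  have hTnn : 0 ≤ ∑ n, x n * (d n - q n) ^ 2 / d n :=
    Finset.sum_nonneg fun n _ => div_nonneg (mul_nonneg (hx n).le (sq_nonneg _)) (hdpos n).le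
  -- assemble
  have hlin' : ∑ n, (∑ m, Q n m * x m) * (xp n - x n) - ∑ n, q n * (xp n - x n)
        + lam * ∑ n, (xp n - x n)
      = ∑ n, (d n - q n) * (xp n - x n) := by
    rw [Finset.mul_sum, ← Finset.sum_sub_distrib, ← Finset.sum_add_distrib]
    refine Finset.sum_congr rfl fun n _ => ?_
    simp only [hddef]
    ring
  have hsplit1 : ∑ n, q n * xp n - ∑ n, q n * x n = ∑ n, q n * (xp n - x n) := by
    rw [← Finset.sum_sub_distrib]; exact Finset.sum_congr rfl fun n _ => by ring
  have hsplit2 : ∑ n, xp n - ∑ n, x n = ∑ n, (xp n - x n) := by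
    rw [← Finset.sum_sub_distrib]
  have key : ∑ n, ∑ m, Q n m * (xp n - x n) * (xp m - x m)
      ≤ ∑ n, x n * (d n - q n) ^ 2 / d n := LS.trans LS2
  nlinarith [key, hlin, hlin', hsplit1, hsplit2, decomp, hTnn]
/-- **The `X` sub-update of model `BC-X` decreases the cost.**
With nonnegative `A_t`, `Y`, `B`, `C`, `α > 0`, `λ_X, μ_X ≥ 0`, and strictly positive
`Xt`, the multiplicative update
`X⁺_{•,t} = Xt_{•,t} ∘ (A_tᵀY_{•,t} + α(BC)_{•,t}) ⊘ (A_tᵀA_tXt_{•,t} + (μ_X+α)Xt_{•,t} + λ_X𝟙)`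
does not increase the `X`-part of the `BC-X` cost function. -/
theorem BCX_X_subupdate_decreases_cost
    (M N K T : ℕ)
    (A : Fin T → Matrix (Fin M) (Fin N) ℝ) (hA : ∀ t m n, 0 ≤ A t m n)
    (Y : Matrix (Fin M) (Fin T) ℝ) (hY : ∀ m t, 0 ≤ Y m t)
    (α lamX muX : ℝ) (hα : 0 < α) (hlamX : 0 ≤ lamX) (hmuX : 0 ≤ muX)
    (B : Matrix (Fin N) (Fin K) ℝ) (hB : ∀ n k, 0 ≤ B n k)
    (C : Matrix (Fin K) (Fin T) ℝ) (hC : ∀ k t, 0 ≤ C k t)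
    (Xt : Matrix (Fin N) (Fin T) ℝ) (hXt : ∀ n t, 0 < Xt n t)
    (Xp : Matrix (Fin N) (Fin T) ℝ)
    (hXp : ∀ n t, Xp n t =
      Xt n t * (((A t)ᵀ *ᵥ fun m => Y m t) n + α * (B * C) n t)
        / ((((A t)ᵀ * A t) *ᵥ fun n' => Xt n' t) n + (muX + α) * Xt n t + lamX)) :
    (∑ t, (1/2) * ∑ m, ((A t *ᵥ fun n => Xp n t) m - Y m t) ^ 2)
        + (α/2) * (∑ n, ∑ t, ((B * C) n t - Xp n t) ^ 2)
        + lamX * (∑ n, ∑ t, |Xp n t|)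
        + (muX/2) * (∑ n, ∑ t, (Xp n t) ^ 2)
      ≤ (∑ t, (1/2) * ∑ m, ((A t *ᵥ fun n => Xt n t) m - Y m t) ^ 2)
        + (α/2) * (∑ n, ∑ t, ((B * C) n t - Xt n t) ^ 2)
        + lamX * (∑ n, ∑ t, |Xt n t|)
        + (muX/2) * (∑ n, ∑ t, (Xt n t) ^ 2) := by
  have hBC : ∀ n t, 0 ≤ (B * C) n t := by
    intro n t
    rw [Matrix.mul_apply]
    exact Finset.sum_nonneg fun k _ => mul_nonneg (hB n k) (hC k t)
  have e : ∀ (F : Fin N → Fin T → ℝ) (c : ℝ),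
      c * (∑ n, ∑ t, F n t) = ∑ t, c * ∑ n, F n t := by
    intro F c
    rw [Finset.sum_comm, Finset.mul_sum]
  rw [e (fun n t => ((B * C) n t - Xp n t) ^ 2) (α/2),
    e (fun n t => |Xp n t|) lamX,
    e (fun n t => (Xp n t) ^ 2) (muX/2),
    e (fun n t => ((B * C) n t - Xt n t) ^ 2) (α/2),
    e (fun n t => |Xt n t|) lamX,
    e (fun n t => (Xt n t) ^ 2) (muX/2),
    ← Finset.sum_add_distrib, ← Finset.sum_add_distrib, ← Finset.sum_add_distrib,
    ← Finset.sum_add_distrib, ← Finset.sum_add_distrib, ← Finset.sum_add_distrib]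
  refine Finset.sum_le_sum fun t _ => ?_
  exact col_step (A t) (hA t) (fun m => Y m t) (fun m => hY m t)
    (fun n => (B * C) n t) (fun n => hBC n t) α lamX muX hα hlamX hmuX
    (fun n => Xt n t) (fun n => hXt n t) (fun n => Xp n t) (fun n => hXp n t)
end

section
/- (C-sub-update of model BC-X decreases the cost.) Let α > 0, λ_C, μ_C ≥ 0, let X ∈ ℝ^{N×T} be nonnegative, B ∈ ℝ^{N×K} have strictly positive entries, and let C̃ ∈ ℝ^{K×T} have strictly positive entries. Define C⁺ := C̃ ∘ (αBᵀX) ⊘ (αBᵀBC̃ + μ_C C̃ + λ_C𝟙_{K×T}). Then (α/2)‖BC⁺ − X‖_F² + λ_C‖C⁺‖₁ + (μ_C/2)‖C⁺‖_F² ≤ (α/2)‖BC̃ − X‖_F² + λ_C‖C̃‖₁ + (μ_C/2)‖C̃‖_F². -/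
open Matrix BigOperators Finset

lemma amgm_aux (a ck cl dk dl : ℝ) (ha : 0 ≤ a) (hck : 0 < ck) (hcl : 0 < cl) :
    a * dk * dl ≤ a * (dk^2 * cl / ck + dl^2 * ck / cl) / 2 := by
  have h : dk * dl ≤ (dk^2 * cl / ck + dl^2 * ck / cl) / 2 := by
    rw [← sub_nonneg]
    have e : (dk^2 * cl / ck + dl^2 * ck / cl)/2 - dk * dl
        = (dk * cl - dl * ck)^2 / (2 * (ck * cl)) := by
      field_simp; ring
    rw [e]; positivity
  calc a * dk * dl = a * (dk * dl) := by ring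
    _ ≤ a * ((dk^2*cl/ck + dl^2*ck/cl)/2) := mul_le_mul_of_nonneg_left h ha
    _ = _ := by ring

lemma leeseung {K : ℕ} (A : Matrix (Fin K) (Fin K) ℝ)
    (hA : ∀ k l, 0 ≤ A k l) (hAs : ∀ k l, A k l = A l k)
    (c d : Fin K → ℝ) (hc : ∀ k, 0 < c k) :
    ∑ k, ∑ l, A k l * d k * d l ≤ ∑ k, ∑ l, A k l * c l * d k ^ 2 / c k := by
  have h1 : ∑ k, ∑ l, A k l * d k * d l
      ≤ ∑ k, ∑ l, A k l * (d k ^2 * c l / c k + d l ^2 * c k / c l) / 2 :=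
    Finset.sum_le_sum fun k _ => Finset.sum_le_sum fun l _ =>
      amgm_aux _ _ _ _ _ (hA k l) (hc k) (hc l)
  refine h1.trans_eq ?_
  have h2 : ∀ k l : Fin K, A k l * (d k ^2 * c l / c k + d l ^2 * c k / c l) / 2
      = A k l * c l * d k^2 / c k / 2 + A k l * c k * d l ^2 / c l / 2 := by
    intro k l; ring
  simp_rw [h2, Finset.sum_add_distrib]
  have h3 : ∑ k, ∑ l, A k l * c k * d l ^2 / c l / 2
      = ∑ k, ∑ l, A k l * c l * d k ^2 / c k / 2 := by
    rw [Finset.sum_comm]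
    exact Finset.sum_congr rfl fun k _ => Finset.sum_congr rfl fun l _ => by rw [hAs]
  rw [h3, ← Finset.sum_add_distrib]
  refine Finset.sum_congr rfl fun k _ => ?_
  rw [← Finset.sum_add_distrib]
  exact Finset.sum_congr rfl fun l _ => by ring


lemma col_step_s9 {N K : ℕ} (hN : 0 < N)
    (α lamC muC : ℝ) (hα : 0 < α) (hlam : 0 ≤ lamC) (hmu : 0 ≤ muC)
    (x : Fin N → ℝ) (hx : ∀ n, 0 ≤ x n)
    (B : Matrix (Fin N) (Fin K) ℝ) (hB : ∀ n k, 0 < B n k)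
    (c : Fin K → ℝ) (hc : ∀ k, 0 < c k)
    (p : Fin K → ℝ)
    (hp : ∀ k, p k = c k * (α * ∑ n, B n k * x n)
        / (α * (∑ l, (∑ n, B n k * B n l) * c l) + muC * c k + lamC)) :
    (α/2) * (∑ n, ((∑ k, B n k * p k) - x n)^2) + lamC * (∑ k, |p k|)
        + (muC/2) * (∑ k, (p k)^2)
    ≤ (α/2) * (∑ n, ((∑ k, B n k * c k) - x n)^2) + lamC * (∑ k, |c k|)
        + (muC/2) * (∑ k, (c k)^2) := by
  -- notation
  set A : Matrix (Fin K) (Fin K) ℝ := fun k l => ∑ n, B n k * B n l with hA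
  set S : Fin K → ℝ := fun k => ∑ l, A k l * c l with hS
  set xh : Fin K → ℝ := fun k => ∑ n, B n k * x n with hxh
  set den : Fin K → ℝ := fun k => α * S k + muC * c k + lamC with hden
  have hApos : ∀ k l, 0 < A k l := fun k l =>
    Finset.sum_pos (fun n _ => mul_pos (hB n k) (hB n l)) ⟨⟨0, hN⟩, Finset.mem_univ _⟩
  have hSpos : ∀ k, 0 < S k := fun k =>
    Finset.sum_pos (fun l _ => mul_pos (hApos k l) (hc l)) ⟨k, Finset.mem_univ k⟩
  have hdenpos : ∀ k, 0 < den k := by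
    intro k
    have h1 := mul_pos hα (hSpos k)
    have h2 := mul_nonneg hmu (hc k).le
    simp only [hden]; linarith
  have hxhnn : ∀ k, 0 ≤ xh k := fun k =>
    Finset.sum_nonneg fun n _ => mul_nonneg (hB n k).le (hx n)
  have hp' : ∀ k, p k = c k * (α * xh k) / den k := fun k => hp k
  have hpnn : ∀ k, 0 ≤ p k := fun k => by
    rw [hp' k]
    exact div_nonneg (mul_nonneg (hc k).le (mul_nonneg hα.le (hxhnn k))) (hdenpos k).le
  set d : Fin K → ℝ := fun k => p k - c k with hd
  set g : Fin K → ℝ := fun k => den k - α * xh k with hg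
  have hdk : ∀ k, d k = -(c k * g k) / den k := by
    intro k
    have h := (hdenpos k).ne'
    simp only [hd, hg, hp' k]
    field_simp
    ring
  have hdg : ∀ k, d k * g k = -(c k * g k ^ 2 / den k) := by
    intro k
    rw [hdk k]; ring
  have hd2 : ∀ k, d k ^ 2 * den k / c k = c k * g k ^ 2 / den k := by
    intro k
    have h := (hdenpos k).ne'
    have h2 := (hc k).ne'
    rw [hdk k]
    field_simp
  -- expansion identities
  have hBp : ∀ n, (∑ k, B n k * p k) = (∑ k, B n k * c k) + ∑ k, B n k * d k := by
    intro n
    rw [← Finset.sum_add_distrib]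
    exact Finset.sum_congr rfl fun k _ => by simp only [hd]; ring
  have hsq : ∑ n, ((∑ k, B n k * p k) - x n)^2
      = ∑ n, ((∑ k, B n k * c k) - x n)^2
        + 2 * ∑ n, ((∑ k, B n k * c k) - x n) * (∑ k, B n k * d k)
        + ∑ n, (∑ k, B n k * d k)^2 := by
    rw [Finset.mul_sum, ← Finset.sum_add_distrib, ← Finset.sum_add_distrib]
    exact Finset.sum_congr rfl fun n _ => by rw [hBp n]; ring
  have hpsum : ∑ k, p k = ∑ k, c k + ∑ k, d k := by
    rw [← Finset.sum_add_distrib]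
    exact Finset.sum_congr rfl fun k _ => by simp only [hd]; ring
  have hp2 : ∑ k, (p k)^2 = ∑ k, (c k)^2 + 2 * ∑ k, c k * d k + ∑ k, d k ^ 2 := by
    rw [Finset.mul_sum, ← Finset.sum_add_distrib, ← Finset.sum_add_distrib]
    exact Finset.sum_congr rfl fun k _ => by simp only [hd]; ring
  -- cross term identity
  have hBR : ∀ k, ∑ n, B n k * ((∑ l, B n l * c l) - x n) = S k - xh k := by
    intro k
    have h1 : ∑ n, B n k * ((∑ l, B n l * c l) - x n)
        = (∑ n, ∑ l, B n k * (B n l * c l)) - xh k := by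
      rw [← Finset.sum_sub_distrib]
      exact Finset.sum_congr rfl fun n _ => by rw [mul_sub, Finset.mul_sum]
    rw [h1]
    congr 1
    rw [Finset.sum_comm]
    simp only [hS, hA]
    refine Finset.sum_congr rfl fun l _ => ?_
    rw [Finset.sum_mul]
    exact Finset.sum_congr rfl fun n _ => by ring
  have e1 : ∑ n, ((∑ k, B n k * c k) - x n) * (∑ k, B n k * d k)
      = ∑ k, d k * (S k - xh k) := by
    simp_rw [Finset.mul_sum]
    rw [Finset.sum_comm]
    refine Finset.sum_congr rfl fun k _ => ?_
    rw [← hBR k, Finset.mul_sum]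
    exact Finset.sum_congr rfl fun n _ => by ring
  have e2 : ∑ n, (∑ k, B n k * d k)^2 = ∑ k, ∑ l, A k l * d k * d l := by
    have h : ∀ n, (∑ k, B n k * d k)^2 = ∑ k, ∑ l, B n k * d k * (B n l * d l) := by
      intro n; rw [sq, Finset.sum_mul_sum]
    simp_rw [h]
    rw [Finset.sum_comm]
    refine Finset.sum_congr rfl fun k _ => ?_
    rw [Finset.sum_comm]
    refine Finset.sum_congr rfl fun l _ => ?_
    simp only [hA]
    rw [Finset.sum_mul, Finset.sum_mul]
    exact Finset.sum_congr rfl fun n _ => by ring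
  -- gradient sum identity
  have hgd : ∑ k, d k * g k
      = α * (∑ k, d k * (S k - xh k)) + muC * ∑ k, c k * d k + lamC * ∑ k, d k := by
    rw [Finset.mul_sum, Finset.mul_sum, Finset.mul_sum, ← Finset.sum_add_distrib,
      ← Finset.sum_add_distrib]
    refine Finset.sum_congr rfl fun k _ => ?_
    simp only [hg, hden]; ring
  -- the bound  T ≤ 0
  have hls := leeseung A (fun k l => (hApos k l).le)
      (fun k l => Finset.sum_congr rfl fun n _ => by ring) c d hc
  have h6 : (α/2) * (∑ k, ∑ l, A k l * c l * d k ^ 2 / c k) + (muC/2) * ∑ k, d k ^ 2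
      ≤ (1/2) * ∑ k, d k ^ 2 * den k / c k := by
    rw [Finset.mul_sum, Finset.mul_sum, Finset.mul_sum, ← Finset.sum_add_distrib]
    refine Finset.sum_le_sum fun k _ => ?_
    have hck := hc k
    have einner : ∑ l, A k l * c l * d k ^ 2 / c k = S k * d k ^ 2 / c k := by
      rw [← Finset.sum_div, ← Finset.sum_mul]
    rw [einner]
    rw [← sub_nonneg]
    have e : 1/2 * (d k ^ 2 * den k / c k)
        - (α/2 * (S k * d k ^2 / c k) + muC/2 * d k ^ 2)
        = lamC * d k ^ 2 / (2 * c k) := by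
      simp only [hden]; field_simp; ring
    rw [e]
    exact div_nonneg (mul_nonneg hlam (sq_nonneg _)) (by nlinarith [hc k])
  have h7 : ∑ k, d k ^ 2 * den k / c k = ∑ k, -(d k * g k) :=
    Finset.sum_congr rfl fun k _ => by rw [hd2 k, hdg k]; ring
  have h8 : ∑ k, d k * g k ≤ 0 :=
    Finset.sum_nonpos fun k _ => by
      rw [hdg k]
      have : 0 ≤ c k * g k ^2 / den k := div_nonneg (mul_nonneg (hc k).le (sq_nonneg _)) (hdenpos k).le
      linarith
  have hT : ∑ k, d k * g k + (α/2) * (∑ k, ∑ l, A k l * d k * d l)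
      + (muC/2) * ∑ k, d k ^ 2 ≤ 0 := by
    have h9 : (α/2) * (∑ k, ∑ l, A k l * d k * d l)
        ≤ (α/2) * (∑ k, ∑ l, A k l * c l * d k ^ 2 / c k) :=
      mul_le_mul_of_nonneg_left hls (by positivity)
    have h10 : (1/2) * ∑ k, d k ^ 2 * den k / c k = -(1/2) * ∑ k, d k * g k := by
      rw [h7, Finset.mul_sum, Finset.mul_sum]
      exact Finset.sum_congr rfl fun k _ => by ring
    linarith
  -- assemble
  have habs_p : ∑ k, |p k| = ∑ k, p k :=
    Finset.sum_congr rfl fun k _ => abs_of_nonneg (hpnn k)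
  have habs_c : ∑ k, |c k| = ∑ k, c k :=
    Finset.sum_congr rfl fun k _ => abs_of_pos (hc k)
  rw [habs_p, habs_c, hsq, hpsum, hp2]
  have := hT
  rw [hgd] at this
  rw [e1] at *
  rw [e2]
  nlinarith [this]


/-- **The `C` sub-update of model `BC-X` decreases the cost.**
With `α > 0`, `λ_C, μ_C ≥ 0`, nonnegative `X`, strictly positive `B` and `Ct`, the
multiplicative update `C⁺ = Ct ∘ (αBᵀX) ⊘ (αBᵀBCt + μ_C Ct + λ_C𝟙)` does not increase
the `C`-part of the `BC-X` cost function. -/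
theorem BCX_C_subupdate_decreases_cost
    (N K T : ℕ)
    (α lamC muC : ℝ) (hα : 0 < α) (hlamC : 0 ≤ lamC) (hmuC : 0 ≤ muC)
    (X : Matrix (Fin N) (Fin T) ℝ) (hX : ∀ n t, 0 ≤ X n t)
    (B : Matrix (Fin N) (Fin K) ℝ) (hB : ∀ n k, 0 < B n k)
    (Ct : Matrix (Fin K) (Fin T) ℝ) (hCt : ∀ k t, 0 < Ct k t)
    (Cp : Matrix (Fin K) (Fin T) ℝ)
    (hCp : ∀ k t, Cp k t =
      Ct k t * (α * (Bᵀ * X) k t)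
        / (α * (Bᵀ * B * Ct) k t + muC * Ct k t + lamC)) :
    (α/2) * (∑ n, ∑ t, ((B * Cp) n t - X n t) ^ 2)
        + lamC * (∑ k, ∑ t, |Cp k t|)
        + (muC/2) * (∑ k, ∑ t, (Cp k t) ^ 2)
      ≤ (α/2) * (∑ n, ∑ t, ((B * Ct) n t - X n t) ^ 2)
        + lamC * (∑ k, ∑ t, |Ct k t|)
        + (muC/2) * (∑ k, ∑ t, (Ct k t) ^ 2) := by
  rcases Nat.eq_zero_or_pos N with hN0 | hN
  · -- degenerate case N = 0 : Cp = 0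
    subst hN0
    have hCp0 : ∀ k t, Cp k t = 0 := by
      intro k t
      rw [hCp k t]
      simp [Matrix.mul_apply]
    simp only [hCp0, Finset.univ_eq_empty, Finset.sum_empty, abs_zero, ne_eq,
      OfNat.ofNat_ne_zero, not_false_eq_true, zero_pow, Finset.sum_const_zero,
      mul_zero, add_zero, zero_add]
    have h1 : 0 ≤ lamC * ∑ k, ∑ t, |Ct k t| :=
      mul_nonneg hlamC (Finset.sum_nonneg fun k _ =>
        Finset.sum_nonneg fun t _ => abs_nonneg _)
    have h2 : 0 ≤ (muC/2) * ∑ k, ∑ t, (Ct k t)^2 :=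
      mul_nonneg (by linarith) (Finset.sum_nonneg fun k _ =>
        Finset.sum_nonneg fun t _ => sq_nonneg _)
    linarith
  · -- main case
    have hcol : ∀ t : Fin T,
        (α/2) * (∑ n, ((∑ k, B n k * Cp k t) - X n t)^2) + lamC * (∑ k, |Cp k t|)
            + (muC/2) * (∑ k, (Cp k t)^2)
        ≤ (α/2) * (∑ n, ((∑ k, B n k * Ct k t) - X n t)^2) + lamC * (∑ k, |Ct k t|)
            + (muC/2) * (∑ k, (Ct k t)^2) := by
      intro t
      refine col_step_s9 hN α lamC muC hα hlamC hmuC (fun n => X n t) (fun n => hX n t)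
        B hB (fun k => Ct k t) (fun k => hCt k t) (fun k => Cp k t) ?_
      intro k
      show Cp k t = _
      rw [hCp k t]
      simp only [Matrix.mul_apply, Matrix.transpose_apply]
    have key : ∀ (M : Matrix (Fin K) (Fin T) ℝ),
        (α/2) * (∑ n, ∑ t, ((B * M) n t - X n t) ^ 2)
          + lamC * (∑ k, ∑ t, |M k t|) + (muC/2) * (∑ k, ∑ t, (M k t) ^ 2)
        = ∑ t, ((α/2) * (∑ n, ((∑ k, B n k * M k t) - X n t)^2)
            + lamC * (∑ k, |M k t|) + (muC/2) * (∑ k, (M k t)^2)) := by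
      intro M
      rw [show (∑ n, ∑ t, ((B * M) n t - X n t) ^ 2)
            = ∑ t, ∑ n, ((B * M) n t - X n t) ^ 2 from Finset.sum_comm,
          show (∑ k, ∑ t, |M k t|) = ∑ t, ∑ k, |M k t| from Finset.sum_comm,
          show (∑ k, ∑ t, (M k t) ^ 2) = ∑ t, ∑ k, (M k t) ^ 2 from Finset.sum_comm,
          Finset.mul_sum, Finset.mul_sum, Finset.mul_sum,
          ← Finset.sum_add_distrib, ← Finset.sum_add_distrib]
      refine Finset.sum_congr rfl fun t _ => ?_
      simp only [Matrix.mul_apply]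
    rw [key Cp, key Ct]
    exact Finset.sum_le_sum fun t _ => hcol t
end

section
/- (C-sub-update of model BC decreases the cost.) Let A_t ∈ ℝ^{M×N} be nonnegative for t = 1,…,T, Y ∈ ℝ^{M×T} nonnegative, λ_C, μ_C ≥ 0, fix B ∈ ℝ^{N×K} nonnegative, and let C̃ ∈ ℝ^{K×T} have strictly positive entries. Define C⁺ columnwise by C⁺_{•,t} := C̃_{•,t} ∘ (BᵀA_tᵀY_{•,t}) ⊘ (BᵀA_tᵀA_t(BC̃)_{•,t} + μ_C C̃_{•,t} + λ_C𝟙_{K×1}), and assume every entry of each denominator vector is strictly positive. Then Σ_{t=1}^T (1/2)‖A_t(BC⁺)_{•,t} − Y_{•,t}‖₂² + λ_C‖C⁺‖₁ + (μ_C/2)‖C⁺‖_F² ≤ Σ_{t=1}^T (1/2)‖A_t(BC̃)_{•,t} − Y_{•,t}‖₂² + λ_C‖C̃‖₁ + (μ_C/2)‖C̃‖_F². -/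
open Matrix BigOperators

lemma quad_bound (K : ℕ) (Q : Matrix (Fin K) (Fin K) ℝ)
    (hQ : ∀ i j, 0 ≤ Q i j) (hsym : ∀ i j, Q i j = Q j i)
    (c : Fin K → ℝ) (hc : ∀ k, 0 < c k) (v : Fin K → ℝ) :
    ∑ k, ∑ l, Q k l * v k * v l ≤ ∑ k, (Q *ᵥ c) k * v k ^ 2 / c k := by
  have key : 0 ≤ ∑ k, ∑ l, Q k l * (c l * v k ^ 2 / c k - v k * v l) := by
    have h2 : (2:ℝ) * ∑ k, ∑ l, Q k l * (c l * v k ^ 2 / c k - v k * v l)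
        = ∑ k, ∑ l, Q k l * ((c l * v k - c k * v l) ^ 2 / (c k * c l)) := by
      have hswap : ∑ k, ∑ l, Q k l * (c l * v k ^ 2 / c k - v k * v l)
          = ∑ k, ∑ l, Q k l * (c k * v l ^ 2 / c l - v k * v l) := by
        rw [Finset.sum_comm]
        refine Finset.sum_congr rfl fun k _ => Finset.sum_congr rfl fun l _ => ?_
        rw [hsym]; ring
      rw [two_mul]
      nth_rewrite 2 [hswap]
      rw [← Finset.sum_add_distrib]
      refine Finset.sum_congr rfl fun k _ => ?_
      rw [← Finset.sum_add_distrib]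
      refine Finset.sum_congr rfl fun l _ => ?_
      have hk := (hc k).ne'
      have hl := (hc l).ne'
      field_simp
      ring
    have hnn : 0 ≤ ∑ k, ∑ l, Q k l * ((c l * v k - c k * v l) ^ 2 / (c k * c l)) :=
      Finset.sum_nonneg (fun k _ =>
        Finset.sum_nonneg (fun l _ =>
          mul_nonneg (hQ k l) (div_nonneg (sq_nonneg _) (le_of_lt (mul_pos (hc k) (hc l))))))
    linarith
  have expand : ∑ k, (Q *ᵥ c) k * v k ^ 2 / c k
      = ∑ k, ∑ l, Q k l * (c l * v k ^ 2 / c k) := by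
    refine Finset.sum_congr rfl fun k _ => ?_
    simp only [mulVec, dotProduct]
    rw [Finset.sum_mul, Finset.sum_div]
    refine Finset.sum_congr rfl fun l _ => ?_
    ring
  have heq : ∑ k, ∑ l, Q k l * (c l * v k ^ 2 / c k - v k * v l)
      = (∑ k, (Q *ᵥ c) k * v k ^ 2 / c k) - ∑ k, ∑ l, Q k l * v k * v l := by
    rw [expand, ← Finset.sum_sub_distrib]
    refine Finset.sum_congr rfl fun k _ => ?_
    rw [← Finset.sum_sub_distrib]
    refine Finset.sum_congr rfl fun l _ => ?_
    ring
  linarith [key, heq.symm.le]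

lemma swap_sum (M K : ℕ) (W : Matrix (Fin M) (Fin K) ℝ) (u : Fin M → ℝ) (δ : Fin K → ℝ) :
    ∑ m, (W *ᵥ δ) m * u m = ∑ k, δ k * (Wᵀ *ᵥ u) k := by
  simp only [mulVec, dotProduct, transpose_apply, Finset.sum_mul, Finset.mul_sum]
  rw [Finset.sum_comm]
  exact Finset.sum_congr rfl fun k _ => Finset.sum_congr rfl fun m _ => by ring

lemma col_step_s12 (M K : ℕ) (W : Matrix (Fin M) (Fin K) ℝ) (hW : ∀ m k, 0 ≤ W m k)
    (y : Fin M → ℝ) (hy : ∀ m, 0 ≤ y m) (lam mu : ℝ) (hlam : 0 ≤ lam) (hmu : 0 ≤ mu)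
    (c cp : Fin K → ℝ) (hc : ∀ k, 0 < c k)
    (hden : ∀ k, 0 < (Wᵀ *ᵥ (W *ᵥ c)) k + mu * c k + lam)
    (hcp : ∀ k, cp k = c k * (Wᵀ *ᵥ y) k / ((Wᵀ *ᵥ (W *ᵥ c)) k + mu * c k + lam)) :
    (1/2) * ∑ m, ((W *ᵥ cp) m - y m)^2 + lam * ∑ k, |cp k| + (mu/2) * ∑ k, (cp k)^2
      ≤ (1/2) * ∑ m, ((W *ᵥ c) m - y m)^2 + lam * ∑ k, |c k| + (mu/2) * ∑ k, (c k)^2 := by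
  obtain ⟨q, hq⟩ : ∃ q : Fin K → ℝ, q = Wᵀ *ᵥ (W *ᵥ c) := ⟨_, rfl⟩
  obtain ⟨wy, hwy⟩ : ∃ w : Fin K → ℝ, w = Wᵀ *ᵥ y := ⟨_, rfl⟩
  simp only [← hq, ← hwy] at hden hcp
  obtain ⟨den, hden'⟩ : ∃ d : Fin K → ℝ, ∀ k, d k = q k + mu * c k + lam := ⟨_, fun _ => rfl⟩
  obtain ⟨g, hg'⟩ : ∃ g : Fin K → ℝ, ∀ k, g k = den k - wy k := ⟨_, fun _ => rfl⟩
  obtain ⟨δ, hδ'⟩ : ∃ d : Fin K → ℝ, ∀ k, d k = cp k - c k := ⟨_, fun _ => rfl⟩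
  have hdenpos : ∀ k, 0 < den k := fun k => (hden' k).symm ▸ hden k
  have hcp' : ∀ k, cp k = c k * wy k / den k := fun k => by rw [hcp k, hden' k]
  -- δ formula
  have hδ : ∀ k, δ k = -(c k * g k / den k) := by
    intro k
    have h0 := (hdenpos k).ne'
    rw [hδ' k, hcp' k, hg' k]
    field_simp
    ring
  -- cp nonneg
  have hWty : ∀ k, 0 ≤ wy k := by
    intro k
    rw [hwy]
    simp only [mulVec, dotProduct, transpose_apply]
    exact Finset.sum_nonneg fun m _ => mul_nonneg (hW m k) (hy m)
  have hcp_nn : ∀ k, 0 ≤ cp k := fun k => by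
    rw [hcp' k]
    exact div_nonneg (mul_nonneg (hc k).le (hWty k)) (hdenpos k).le
  have habs_cp : ∀ k, |cp k| = cp k := fun k => abs_of_nonneg (hcp_nn k)
  have habs_c : ∀ k, |c k| = c k := fun k => abs_of_nonneg (hc k).le
  -- mulVec additivity
  have hlin : ∀ m, (W *ᵥ cp) m = (W *ᵥ c) m + (W *ᵥ δ) m := by
    intro m
    simp only [mulVec, dotProduct, ← Finset.sum_add_distrib]
    exact Finset.sum_congr rfl fun k _ => by rw [hδ' k]; ring
  -- quadratic expansion
  have hexp : ∑ m, ((W *ᵥ cp) m - y m)^2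
      = ∑ m, ((W *ᵥ c) m - y m)^2 + 2 * ∑ k, δ k * (q k - wy k)
        + ∑ m, ((W *ᵥ δ) m)^2 := by
    have h1 : ∑ m, ((W *ᵥ cp) m - y m)^2
        = ∑ m, (((W *ᵥ c) m - y m)^2 + 2 * ((W *ᵥ δ) m * ((W *ᵥ c) m - y m)) + ((W *ᵥ δ) m)^2) := by
      refine Finset.sum_congr rfl fun m _ => ?_
      rw [hlin m]; ring
    have h2 : ∑ k, δ k * (Wᵀ *ᵥ fun m => (W *ᵥ c) m - y m) k = ∑ k, δ k * (q k - wy k) := by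
      refine Finset.sum_congr rfl fun k _ => ?_
      have : (Wᵀ *ᵥ fun m => (W *ᵥ c) m - y m) k = q k - wy k := by
        rw [hq, hwy]
        simp only [mulVec, dotProduct, transpose_apply, ← Finset.sum_sub_distrib]
        exact Finset.sum_congr rfl fun m _ => by ring
      rw [this]
    rw [h1, Finset.sum_add_distrib, Finset.sum_add_distrib, ← Finset.mul_sum,
      swap_sum M K W (fun m => (W *ᵥ c) m - y m) δ, h2]
  -- total difference identity
  have hdiff : (1/2) * ∑ m, ((W *ᵥ cp) m - y m)^2 + lam * ∑ k, cp k + (mu/2) * ∑ k, (cp k)^2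
      - ((1/2) * ∑ m, ((W *ᵥ c) m - y m)^2 + lam * ∑ k, c k + (mu/2) * ∑ k, (c k)^2)
      = ∑ k, δ k * g k + (1/2) * ∑ m, ((W *ᵥ δ) m)^2 + (mu/2) * ∑ k, (δ k)^2 := by
    rw [hexp]
    have hsum1 : ∑ k, cp k = ∑ k, c k + ∑ k, δ k := by
      rw [← Finset.sum_add_distrib]
      exact Finset.sum_congr rfl fun k _ => by rw [hδ' k]; ring
    have hsum2 : ∑ k, (cp k)^2 = ∑ k, ((c k)^2 + 2 * (c k * δ k) + (δ k)^2) := by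
      refine Finset.sum_congr rfl fun k _ => ?_
      rw [hδ' k]; ring
    have hgsum : ∑ k, δ k * g k
        = ∑ k, (δ k * (q k - wy k) + mu * (c k * δ k) + lam * δ k) := by
      refine Finset.sum_congr rfl fun k _ => ?_
      rw [hg' k, hden' k]; ring
    rw [hsum1]
    rw [show ∑ k, (cp k)^2 = ∑ k, (c k)^2 + 2 * ∑ k, c k * δ k + ∑ k, (δ k)^2 from by
      rw [hsum2, Finset.sum_add_distrib, Finset.sum_add_distrib, ← Finset.mul_sum]]
    rw [show ∑ k, δ k * g k
        = (∑ k, δ k * (q k - wy k)) + mu * ∑ k, c k * δ k + lam * ∑ k, δ k from by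
      rw [hgsum, Finset.sum_add_distrib, Finset.sum_add_distrib, ← Finset.mul_sum,
        ← Finset.mul_sum]]
    ring
  -- quadratic bound
  have hQ : ∑ m, ((W *ᵥ δ) m)^2 ≤ ∑ k, q k * δ k ^ 2 / c k := by
    have h1 : ∑ m, ((W *ᵥ δ) m)^2 = ∑ k, ∑ l, (Wᵀ * W) k l * δ k * δ l := by
      calc ∑ m, ((W *ᵥ δ) m)^2 = ∑ m, (W *ᵥ δ) m * (W *ᵥ δ) m :=
            Finset.sum_congr rfl fun m _ => by ring
        _ = ∑ k, δ k * (Wᵀ *ᵥ (W *ᵥ δ)) k := swap_sum M K W (W *ᵥ δ) δ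
        _ = ∑ k, ∑ l, (Wᵀ * W) k l * δ k * δ l := by
            refine Finset.sum_congr rfl fun k _ => ?_
            rw [mulVec_mulVec]
            simp only [mulVec, dotProduct, Finset.mul_sum]
            exact Finset.sum_congr rfl fun l _ => by ring
    have hqc : ∀ k, q k = ((Wᵀ * W) *ᵥ c) k := fun k => by rw [hq, mulVec_mulVec]
    have h2 : ∑ k, q k * δ k ^ 2 / c k = ∑ k, ((Wᵀ * W) *ᵥ c) k * δ k ^ 2 / c k :=
      Finset.sum_congr rfl fun k _ => by rw [hqc k]
    rw [h1, h2]
    exact quad_bound K (Wᵀ * W)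
      (fun i j => by
        simp only [Matrix.mul_apply, transpose_apply]
        exact Finset.sum_nonneg fun m _ => mul_nonneg (hW m i) (hW m j))
      (fun i j => by
        simp only [Matrix.mul_apply, transpose_apply]
        exact Finset.sum_congr rfl fun m _ => by ring)
      c hc δ
  have hbound : (1/2) * ∑ m, ((W *ᵥ δ) m)^2 + (mu/2) * ∑ k, (δ k)^2
      ≤ (1/2) * ∑ k, den k * (δ k)^2 / c k := by
    have hterm : ∀ k, q k * δ k ^ 2 / c k + mu * (δ k)^2 ≤ den k * (δ k)^2 / c k := by
      intro k
      have hck := hc k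
      have heq : den k * (δ k)^2 / c k
          = q k * δ k ^ 2 / c k + mu * (δ k)^2 + lam * (δ k)^2 / c k := by
        rw [hden' k]
        field_simp
      have h0 : 0 ≤ lam * (δ k)^2 / c k := div_nonneg (mul_nonneg hlam (sq_nonneg _)) hck.le
      linarith
    have hsum := Finset.sum_le_sum (fun k (_ : k ∈ Finset.univ) => hterm k)
    rw [Finset.sum_add_distrib, ← Finset.mul_sum] at hsum
    linarith
  -- final: Σ δ g + ½ Σ den δ²/c ≤ 0
  have hfinal : ∑ k, δ k * g k + (1/2) * ∑ k, den k * (δ k)^2 / c k ≤ 0 := by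
    have hterm : ∀ k, δ k * g k + (1/2) * (den k * (δ k)^2 / c k)
        = -(c k * (g k)^2 / (2 * den k)) := by
      intro k
      rw [hδ k]
      have h0 := (hdenpos k).ne'
      have h1 := (hc k).ne'
      field_simp
      ring
    have heq : ∑ k, (δ k * g k + (1/2) * (den k * (δ k)^2 / c k))
        = ∑ k, -(c k * (g k)^2 / (2 * den k)) := Finset.sum_congr rfl fun k _ => hterm k
    rw [Finset.sum_add_distrib, ← Finset.mul_sum] at heq
    have hnn : ∑ k, -(c k * (g k)^2 / (2 * den k)) ≤ 0 := by
      refine Finset.sum_nonpos fun k _ => ?_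
      simp only [neg_nonpos]
      exact div_nonneg (mul_nonneg (hc k).le (sq_nonneg _)) (by linarith [hdenpos k])
    linarith
  simp only [habs_cp, habs_c]
  linarith [hdiff, hbound, hfinal]

/-- **The `C` sub-update of model `BC` decreases the cost.**
With nonnegative `A_t`, `Y`, `B`, parameters `λ_C, μ_C ≥ 0`, strictly positive `Ct`, and
strictly positive denominator vectors, the columnwise multiplicative update
`C⁺_{•,t} = Ct_{•,t} ∘ (BᵀA_tᵀY_{•,t}) ⊘ (BᵀA_tᵀA_t(BCt)_{•,t} + μ_C Ct_{•,t} + λ_C𝟙)`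
does not increase the `C`-part of the `BC` cost function. -/
theorem BC_C_subupdate_decreases_cost
    (M N K T : ℕ)
    (A : Fin T → Matrix (Fin M) (Fin N) ℝ) (hA : ∀ t m n, 0 ≤ A t m n)
    (Y : Matrix (Fin M) (Fin T) ℝ) (hY : ∀ m t, 0 ≤ Y m t)
    (lamC muC : ℝ) (hlamC : 0 ≤ lamC) (hmuC : 0 ≤ muC)
    (B : Matrix (Fin N) (Fin K) ℝ) (hB : ∀ n k, 0 ≤ B n k)
    (Ct : Matrix (Fin K) (Fin T) ℝ) (hCt : ∀ k t, 0 < Ct k t)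
    (hden : ∀ k t,
      0 < (Bᵀ *ᵥ (((A t)ᵀ * A t) *ᵥ fun n => (B * Ct) n t)) k
            + muC * Ct k t + lamC)
    (Cp : Matrix (Fin K) (Fin T) ℝ)
    (hCp : ∀ k t, Cp k t =
      Ct k t * (Bᵀ *ᵥ ((A t)ᵀ *ᵥ fun m => Y m t)) k
        / ((Bᵀ *ᵥ (((A t)ᵀ * A t) *ᵥ fun n => (B * Ct) n t)) k
            + muC * Ct k t + lamC)) :
    (∑ t, (1/2) * ∑ m, ((A t *ᵥ fun n => (B * Cp) n t) m - Y m t) ^ 2)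
        + lamC * (∑ k, ∑ t, |Cp k t|)
        + (muC/2) * (∑ k, ∑ t, (Cp k t) ^ 2)
      ≤ (∑ t, (1/2) * ∑ m, ((A t *ᵥ fun n => (B * Ct) n t) m - Y m t) ^ 2)
        + lamC * (∑ k, ∑ t, |Ct k t|)
        + (muC/2) * (∑ k, ∑ t, (Ct k t) ^ 2) := by
  have colC : ∀ (C : Matrix (Fin K) (Fin T) ℝ) (t : Fin T),
      (fun n => (B * C) n t) = B *ᵥ (fun k => C k t) := by
    intro C t
    funext n
    simp [Matrix.mul_apply, mulVec, dotProduct]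
  -- per-column inequality
  have key : ∀ t : Fin T,
      (1/2) * ∑ m, ((A t *ᵥ fun n => (B * Cp) n t) m - Y m t) ^ 2
        + lamC * ∑ k, |Cp k t| + (muC/2) * ∑ k, (Cp k t) ^ 2
      ≤ (1/2) * ∑ m, ((A t *ᵥ fun n => (B * Ct) n t) m - Y m t) ^ 2
        + lamC * ∑ k, |Ct k t| + (muC/2) * ∑ k, (Ct k t) ^ 2 := by
    intro t
    set W : Matrix (Fin M) (Fin K) ℝ := A t * B with hW_def
    have hWtW : Wᵀ *ᵥ (W *ᵥ (fun k => Ct k t))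
        = Bᵀ *ᵥ (((A t)ᵀ * A t) *ᵥ fun n => (B * Ct) n t) := by
      rw [colC Ct t, hW_def]
      simp only [transpose_mul, ← mulVec_mulVec]
    have hWty : Wᵀ *ᵥ (fun m => Y m t)
        = Bᵀ *ᵥ ((A t)ᵀ *ᵥ fun m => Y m t) := by
      rw [hW_def]
      simp only [transpose_mul, ← mulVec_mulVec]
    have hgoalCp : (A t *ᵥ fun n => (B * Cp) n t) = W *ᵥ (fun k => Cp k t) := by
      rw [colC Cp t, hW_def, mulVec_mulVec]
    have hgoalCt : (A t *ᵥ fun n => (B * Ct) n t) = W *ᵥ (fun k => Ct k t) := by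
      rw [colC Ct t, hW_def, mulVec_mulVec]
    rw [hgoalCp, hgoalCt]
    exact col_step_s12 M K W
      (fun m k => by
        simp only [hW_def, Matrix.mul_apply]
        exact Finset.sum_nonneg fun n _ => mul_nonneg (hA t m n) (hB n k))
      (fun m => Y m t) (fun m => hY m t) lamC muC hlamC hmuC
      (fun k => Ct k t) (fun k => Cp k t) (fun k => hCt k t)
      (fun k => by rw [hWtW]; exact hden k t)
      (fun k => by rw [hWtW, hWty]; exact hCp k t)
  calc (∑ t, (1/2) * ∑ m, ((A t *ᵥ fun n => (B * Cp) n t) m - Y m t) ^ 2)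
        + lamC * (∑ k, ∑ t, |Cp k t|) + (muC/2) * (∑ k, ∑ t, (Cp k t) ^ 2)
      = ∑ t, ((1/2) * ∑ m, ((A t *ᵥ fun n => (B * Cp) n t) m - Y m t) ^ 2
          + lamC * ∑ k, |Cp k t| + (muC/2) * ∑ k, (Cp k t) ^ 2) := by
        rw [Finset.sum_add_distrib, Finset.sum_add_distrib, ← Finset.mul_sum,
          ← Finset.mul_sum, ← Finset.mul_sum, Finset.sum_comm (f := fun k t => |Cp k t|),
          Finset.sum_comm (f := fun k t => (Cp k t) ^ 2)]
    _ ≤ ∑ t, ((1/2) * ∑ m, ((A t *ᵥ fun n => (B * Ct) n t) m - Y m t) ^ 2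
          + lamC * ∑ k, |Ct k t| + (muC/2) * ∑ k, (Ct k t) ^ 2) :=
        Finset.sum_le_sum fun t _ => key t
    _ = (∑ t, (1/2) * ∑ m, ((A t *ᵥ fun n => (B * Ct) n t) m - Y m t) ^ 2)
        + lamC * (∑ k, ∑ t, |Ct k t|) + (muC/2) * (∑ k, ∑ t, (Ct k t) ^ 2) := by
        rw [Finset.sum_add_distrib, Finset.sum_add_distrib, ← Finset.mul_sum,
          ← Finset.mul_sum, ← Finset.mul_sum, Finset.sum_comm (f := fun k t => |Ct k t|),
          Finset.sum_comm (f := fun k t => (Ct k t) ^ 2)]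
end
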